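/- Let $N, k \ge 1$, let $d_1,\dots,d_N, R$ be positive integers, and let $\mathcal{X} \in \mathbb{R}^{d_1 \times \cdots \times d_N}$ be a fixed tensor. Let $\mathcal{T}_1, \dots, \mathcal{T}_k$ be independent tensor train tensors, each of the form $\mathcal{T}_i = [\![\mathcal{G}^{1,i}, \dots, \mathcal{G}^{N,i}]\!]$ where all core entries are i.i.d. Rademacher random variables, and define the tensorized Rademacher random projection $f^{TT}_R : \mathbb{R}^{d_1 \times \cdots \times d_N} \to \mathbb{R}^k$ component-wise by $(f^{TT}_R(\mathcal{X}))_i = \frac{1}{\sqrt{k R^{N-1}}} \langle \mathcal{T}_i, \mathcal{X} \rangle$ for $i \in [k]$. Then $\mathbb{E}\,\|f^{TT}_R(\mathcal{X})\|_2^2 = \|\mathcal{X}\|_F^2$. -/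

import Mathlib

/-!
Summing out the bond indices writes `⟨𝒯, 𝒳⟩ = ∑_{(i, r)} 𝒳_i M_{(i, r)}` over paths `(i, r)`
(a multi-index and a choice of all bond indices), where `M_{(i, r)}` is the product of the `N`
core entries read along the path. Distinct paths read distinct sets of entries, and products of
independent Rademacher variables over distinct sets are orthonormal in `L²`; hence
`𝔼 ⟨𝒯, 𝒳⟩² = ∑_{(i, r)} 𝒳_i² = R^(N-1) ‖𝒳‖_F²`, and averaging over the `k` independent trains
with the factor `1 / (k R^(N-1))` gives `‖𝒳‖_F²`.
-/

open MeasureTheory ProbabilityTheory Matrix Finset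

noncomputable section

/-- The Rademacher distribution on `ℝ`: uniform on `{1, -1}`. -/
def radDist : Measure ℝ :=
  (2⁻¹ : ENNReal) • Measure.dirac (1 : ℝ) + (2⁻¹ : ENNReal) • Measure.dirac (-1 : ℝ)

/-- Path-sum contraction of tensor-train cores `G` at multi-index `i`, with the
two boundary bond indices fixed to `a` and `b`. -/
def ttPath {N : ℕ} (d : Fin N → ℕ) (ρ : Fin (N + 1) → ℕ)
    (G : (n : Fin N) → Fin (ρ n.castSucc) → Fin (d n) → Fin (ρ n.succ) → ℝ)
    (i : (n : Fin N) → Fin (d n)) (a : Fin (ρ 0)) (b : Fin (ρ (Fin.last N))) : ℝ :=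
  ∑ r : ((n : Fin (N + 1)) → Fin (ρ n)),
    if r 0 = a ∧ r (Fin.last N) = b then
      ∏ n : Fin N, G n (r n.castSucc) (i n) (r n.succ)
    else 0

theorem integral_pow_radDist (m : ℕ) : ∫ x, x ^ m ∂radDist = if Even m then 1 else 0 := by
  have hint (a : ℝ) : Integrable (fun x : ℝ => x ^ m) ((2⁻¹ : ENNReal) • Measure.dirac a) :=
    (integrable_dirac (by simp)).smul_measure (by simp)
  rw [radDist, integral_add_measure (hint 1) (hint (-1)), integral_smul_measure,
    integral_smul_measure, integral_dirac, integral_dirac]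
  rcases Nat.even_or_odd m with h | h
  · norm_num [h, h.neg_one_pow]
  · norm_num [Nat.not_even_iff_odd.2 h, h.neg_one_pow]

theorem ae_abs_le_one_of_map_eq_radDist {Ω : Type*} [MeasurableSpace Ω] {μ : Measure Ω}
    {W : Ω → ℝ} (hW : Measurable W) (hdist : μ.map W = radDist) : ∀ᵐ ω ∂μ, |W ω| ≤ 1 := by
  refine ae_of_ae_map (p := fun x => |x| ≤ 1) hW.aemeasurable ?_
  simp [hdist, radDist]

theorem prod_mul_prod_eq_prod_pow {ι M : Type*} [Fintype ι] [DecidableEq ι] [CommMonoid M]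
    (S T : Finset ι) (f : ι → M) :
    (∏ i ∈ S, f i) * ∏ i ∈ T, f i =
      ∏ i, f i ^ ((if i ∈ S then 1 else 0) + (if i ∈ T then 1 else 0)) := by
  simp only [pow_add, prod_mul_distrib, pow_ite, pow_one, pow_zero, Fintype.prod_ite_mem]

section RademacherFamily

variable {Ω ι : Type*} [MeasurableSpace Ω] {μ : Measure Ω} [Fintype ι] {Z : ι → Ω → ℝ}

theorem integrable_prod_pow_of_map_eq_radDist [IsFiniteMeasure μ] (hmeas : ∀ i, Measurable (Z i))
    (hdist : ∀ i, μ.map (Z i) = radDist) (m : ι → ℕ) :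
    Integrable (fun ω => ∏ i, Z i ω ^ m i) μ := by
  refine .of_bound (by fun_prop) 1 ?_
  filter_upwards [ae_all_iff.2 fun i => ae_abs_le_one_of_map_eq_radDist (hmeas i) (hdist i)]
    with ω h
  rw [Real.norm_eq_abs, abs_prod]
  exact prod_le_one (fun _ _ => abs_nonneg _) fun i _ => by
    rw [abs_pow]; exact pow_le_one₀ (abs_nonneg _) (h i)

theorem integral_prod_pow_of_iIndepFun_radDist (hmeas : ∀ i, Measurable (Z i))
    (hind : iIndepFun Z μ) (hdist : ∀ i, μ.map (Z i) = radDist) (m : ι → ℕ) :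
    ∫ ω, ∏ i, Z i ω ^ m i ∂μ = ∏ i, if Even (m i) then 1 else 0 := by
  rw [hind.integral_fun_prod_comp (f := fun i x => x ^ m i) (fun i => (hmeas i).aemeasurable)
    (fun i => by fun_prop)]
  refine prod_congr rfl fun i _ => ?_
  rw [← integral_map (f := fun x : ℝ => x ^ m i) (hmeas i).aemeasurable (by fun_prop), hdist i,
    integral_pow_radDist]

variable [DecidableEq ι]

theorem integrable_prod_mul_prod_of_map_eq_radDist [IsFiniteMeasure μ]
    (hmeas : ∀ i, Measurable (Z i)) (hdist : ∀ i, μ.map (Z i) = radDist) (S T : Finset ι) :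
    Integrable (fun ω => (∏ i ∈ S, Z i ω) * ∏ i ∈ T, Z i ω) μ := by
  simp_rw [prod_mul_prod_eq_prod_pow]
  exact integrable_prod_pow_of_map_eq_radDist hmeas hdist _

/-- An index in exactly one of `S`, `T` occurs to an odd power, whose expectation vanishes. -/
theorem integral_prod_mul_prod_of_iIndepFun_radDist (hmeas : ∀ i, Measurable (Z i))
    (hind : iIndepFun Z μ) (hdist : ∀ i, μ.map (Z i) = radDist) (S T : Finset ι) :
    ∫ ω, (∏ i ∈ S, Z i ω) * ∏ i ∈ T, Z i ω ∂μ = if S = T then 1 else 0 := by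
  have heven (i : ι) :
      Even ((if i ∈ S then 1 else 0) + (if i ∈ T then 1 else 0)) ↔ (i ∈ S ↔ i ∈ T) := by
    split_ifs <;> simp_all
  simp_rw [prod_mul_prod_eq_prod_pow, integral_prod_pow_of_iIndepFun_radDist hmeas hind hdist,
    heven, Fintype.prod_boole, Finset.ext_iff]

end RademacherFamily

section Orthonormal

variable {Ω J : Type*} [MeasurableSpace Ω] {μ : Measure Ω} [Fintype J] {M : J → Ω → ℝ}

theorem sq_sum_mul_eq_sum_sum (a x : J → ℝ) :
    (∑ u, a u * x u) ^ 2 = ∑ u, ∑ v, a u * a v * (x u * x v) := by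
  rw [sq, sum_mul_sum]
  exact sum_congr rfl fun _ _ => sum_congr rfl fun _ _ => by ring

theorem integrable_sq_sum_mul (hM : ∀ u v, Integrable (fun ω => M u ω * M v ω) μ) (a : J → ℝ) :
    Integrable (fun ω => (∑ u, a u * M u ω) ^ 2) μ := by
  simp_rw [sq_sum_mul_eq_sum_sum]
  exact integrable_finsetSum _ fun u _ => integrable_finsetSum _ fun v _ => (hM u v).const_mul _

theorem integral_sq_sum_mul_of_orthonormal [DecidableEq J]
    (hM : ∀ u v, Integrable (fun ω => M u ω * M v ω) μ)
    (horth : ∀ u v, ∫ ω, M u ω * M v ω ∂μ = if u = v then 1 else 0) (a : J → ℝ) :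
    ∫ ω, (∑ u, a u * M u ω) ^ 2 ∂μ = ∑ u, a u ^ 2 := by
  simp_rw [sq_sum_mul_eq_sum_sum]
  rw [integral_finsetSum _ fun u _ =>
    integrable_finsetSum _ fun v _ => (hM u v).const_mul _]
  refine sum_congr rfl fun u _ => ?_
  rw [integral_finsetSum _ fun v _ => (hM u v).const_mul _]
  simp [integral_const_mul, horth, sq]

end Orthonormal

section TensorTrain

variable {N : ℕ} (d : Fin N → ℕ) (ρ : Fin (N + 1) → ℕ)

/-- `⟨𝒯, 𝒳⟩` for the TT tensor `𝒯 = ⟦G⟧`. -/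
def ttInner (G : (n : Fin N) → Fin (ρ n.castSucc) → Fin (d n) → Fin (ρ n.succ) → ℝ)
    (X : ((n : Fin N) → Fin (d n)) → ℝ) : ℝ :=
  ∑ i, X i * ∑ a, ∑ b, ttPath d ρ G i a b

abbrev TTCoreIndex := Σ n : Fin N, Fin (ρ n.castSucc) × Fin (d n) × Fin (ρ n.succ)

/-- A multi-index `i` together with a choice `r` of all bond indices, boundary ones included. -/
abbrev TTPath := ((n : Fin N) → Fin (d n)) × ((n : Fin (N + 1)) → Fin (ρ n))

def ttPathEntries (u : TTPath d ρ) : Finset (TTCoreIndex d ρ) :=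
  univ.map ⟨fun n => ⟨n, (u.2 n.castSucc, u.1 n, u.2 n.succ)⟩, fun _ _ h => congrArg Sigma.fst h⟩

variable {d ρ}

theorem sum_sum_ttPath (G : (n : Fin N) → Fin (ρ n.castSucc) → Fin (d n) → Fin (ρ n.succ) → ℝ)
    (i : (n : Fin N) → Fin (d n)) :
    ∑ a, ∑ b, ttPath d ρ G i a b =
      ∑ r : (n : Fin (N + 1)) → Fin (ρ n), ∏ n, G n (r n.castSucc) (i n) (r n.succ) := by
  simp only [ttPath, ite_and]
  rw [sum_comm]
  refine (sum_congr rfl fun b _ => sum_comm).trans ?_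
  simp only [sum_ite_eq, mem_univ, ↓reduceIte]
  rw [sum_comm]
  simp only [sum_ite_eq, mem_univ, ↓reduceIte]

theorem ttInner_eq_sum_prod_ttPathEntries
    (G : (n : Fin N) → Fin (ρ n.castSucc) → Fin (d n) → Fin (ρ n.succ) → ℝ)
    (X : ((n : Fin N) → Fin (d n)) → ℝ) :
    ttInner d ρ G X =
      ∑ u : TTPath d ρ, X u.1 * ∏ p ∈ ttPathEntries d ρ u, G p.1 p.2.1 p.2.2.1 p.2.2.2 := by
  simp only [ttInner, sum_sum_ttPath, ttPathEntries, prod_map, Fintype.sum_prod_type, mul_sum]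
  rfl

theorem ttPathEntries_injective (hρlast : ρ (Fin.last N) = 1) :
    Function.Injective (ttPathEntries d ρ) := by
  rintro ⟨i, r⟩ ⟨j, s⟩ h
  have htrip (n : Fin N) : (s n.castSucc, j n, s n.succ) = (r n.castSucc, i n, r n.succ) := by
    have hmem : ⟨n, (r n.castSucc, i n, r n.succ)⟩ ∈ ttPathEntries d ρ (j, s) :=
      h ▸ mem_map_of_mem _ (mem_univ n)
    obtain ⟨m, -, hm⟩ := mem_map.1 hmem
    obtain ⟨rfl, hm⟩ := Sigma.mk.inj_iff.1 hm
    exact eq_of_heq hm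
  refine Prod.ext (funext fun n => (congrArg (·.2.1) (htrip n)).symm) (funext fun m => ?_)
  induction m using Fin.lastCases with
  | last =>
    have hr : (r (Fin.last N) : ℕ) < 1 := hρlast ▸ (r _).isLt
    have hs : (s (Fin.last N) : ℕ) < 1 := hρlast ▸ (s _).isLt
    exact Fin.ext (by omega)
  | cast n => exact (congrArg (·.1) (htrip n)).symm

theorem card_ttBonds (hρ0 : ρ 0 = 1) (hρlast : ρ (Fin.last N) = 1) {R : ℕ}
    (hρmid : ∀ n : Fin (N + 1), n ≠ 0 → n ≠ Fin.last N → ρ n = R) :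
    Fintype.card ((n : Fin (N + 1)) → Fin (ρ n)) = R ^ (N - 1) := by
  rw [Fintype.card_pi]
  simp only [Fintype.card_fin]
  cases N with
  | zero => simpa using hρ0
  | succ N =>
    rw [Fin.prod_univ_succ, Fin.prod_univ_castSucc, hρ0, Fin.succ_last, hρlast]
    simp [hρmid _ (Fin.succ_ne_zero _) (Fin.succ_castSucc _ ▸ (Fin.castSucc_lt_last _).ne)]

end TensorTrain

section RandomTensorTrain

variable {Ω : Type*} [MeasurableSpace Ω] {μ : Measure Ω} {N : ℕ} {d : Fin N → ℕ}
  {ρ : Fin (N + 1) → ℕ} {G : Ω → (n : Fin N) → Fin (ρ n.castSucc) → Fin (d n) → Fin (ρ n.succ) → ℝ}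

theorem integrable_sq_ttInner [IsFiniteMeasure μ]
    (hmeas : ∀ n a i b, Measurable (fun ω => G ω n a i b))
    (hdist : ∀ n a i b, μ.map (fun ω => G ω n a i b) = radDist)
    (X : ((n : Fin N) → Fin (d n)) → ℝ) :
    Integrable (fun ω => ttInner d ρ (G ω) X ^ 2) μ := by
  simp_rw [ttInner_eq_sum_prod_ttPathEntries]
  exact integrable_sq_sum_mul
    (M := fun (u : TTPath d ρ) ω => ∏ p ∈ ttPathEntries d ρ u, G ω p.1 p.2.1 p.2.2.1 p.2.2.2)
    (fun _ _ => integrable_prod_mul_prod_of_map_eq_radDist (fun _ => hmeas ..)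
      (fun _ => hdist ..) _ _) _

theorem integral_prod_ttPathEntries_mul_prod (hρlast : ρ (Fin.last N) = 1)
    (hmeas : ∀ n a i b, Measurable (fun ω => G ω n a i b))
    (hdist : ∀ n a i b, μ.map (fun ω => G ω n a i b) = radDist)
    (hind : iIndepFun (fun (p : TTCoreIndex d ρ) ω => G ω p.1 p.2.1 p.2.2.1 p.2.2.2) μ)
    (u v : TTPath d ρ) :
    ∫ ω, (∏ p ∈ ttPathEntries d ρ u, G ω p.1 p.2.1 p.2.2.1 p.2.2.2) *
      ∏ p ∈ ttPathEntries d ρ v, G ω p.1 p.2.1 p.2.2.1 p.2.2.2 ∂μ = if u = v then 1 else 0 := by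
  rw [integral_prod_mul_prod_of_iIndepFun_radDist (fun _ => hmeas ..) hind (fun _ => hdist ..)]
  exact if_congr (ttPathEntries_injective hρlast).eq_iff rfl rfl

theorem integral_sq_ttInner (hρlast : ρ (Fin.last N) = 1)
    (hmeas : ∀ n a i b, Measurable (fun ω => G ω n a i b))
    (hdist : ∀ n a i b, μ.map (fun ω => G ω n a i b) = radDist)
    (hind : iIndepFun (fun (p : TTCoreIndex d ρ) ω => G ω p.1 p.2.1 p.2.2.1 p.2.2.2) μ)
    (X : ((n : Fin N) → Fin (d n)) → ℝ) :
    ∫ ω, ttInner d ρ (G ω) X ^ 2 ∂μ =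
      Fintype.card ((n : Fin (N + 1)) → Fin (ρ n)) * ∑ i, X i ^ 2 := by
  have := hind.isProbabilityMeasure
  simp_rw [ttInner_eq_sum_prod_ttPathEntries]
  rw [integral_sq_sum_mul_of_orthonormal
    (M := fun (u : TTPath d ρ) ω => ∏ p ∈ ttPathEntries d ρ u, G ω p.1 p.2.1 p.2.2.1 p.2.2.2)
    (fun _ _ => integrable_prod_mul_prod_of_map_eq_radDist (fun _ => hmeas ..)
      (fun _ => hdist ..) _ _)
    (integral_prod_ttPathEntries_mul_prod hρlast hmeas hdist hind)]
  simp [Fintype.sum_prod_type, mul_sum]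

end RandomTensorTrain

theorem tt_rademacher_rp_expected_isometry_general
    {Ω : Type} [MeasurableSpace Ω] (μ : Measure Ω) [IsProbabilityMeasure μ]
    (N k : ℕ) (hk : 1 ≤ k)
    (d : Fin N → ℕ) (R : ℕ) (hR : 0 < R)
    (ρ : Fin (N + 1) → ℕ) (hρ0 : ρ 0 = 1) (hρlast : ρ (Fin.last N) = 1)
    (hρmid : ∀ n : Fin (N + 1), n ≠ 0 → n ≠ Fin.last N → ρ n = R)
    (X : ((n : Fin N) → Fin (d n)) → ℝ)
    (G : Ω → Fin k → (n : Fin N) → Fin (ρ n.castSucc) → Fin (d n) → Fin (ρ n.succ) → ℝ)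
    (hGmeas : ∀ κ n a i b, Measurable (fun ω => G ω κ n a i b))
    (hGdist : ∀ κ n a i b, Measure.map (fun ω => G ω κ n a i b) μ = radDist)
    (hGindep : iIndepFun
      (fun p : Fin k × (Σ n : Fin N, Fin (ρ n.castSucc) × Fin (d n) × Fin (ρ n.succ)) =>
        fun ω => G ω p.1 p.2.1 p.2.2.1 p.2.2.2.1 p.2.2.2.2) μ)
    (f : Ω → Fin k → ℝ)
    (hf : ∀ ω κ, f ω κ = (1 / Real.sqrt ((k : ℝ) * (R : ℝ) ^ (N - 1))) *
      ∑ i, X i * ∑ a, ∑ b, ttPath d ρ (G ω κ) i a b) :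
    ∫ ω, ∑ κ, (f ω κ) ^ 2 ∂μ = ∑ i, (X i) ^ 2 := by
  have hscale : 0 < (k : ℝ) * (R : ℝ) ^ (N - 1) := by positivity
  have hsq (ω : Ω) (κ : Fin k) :
      f ω κ ^ 2 = ((k : ℝ) * (R : ℝ) ^ (N - 1))⁻¹ * ttInner d ρ (G ω κ) X ^ 2 := by
    rw [hf, ttInner, mul_pow, div_pow, one_pow, Real.sq_sqrt hscale.le, one_div]
  have hindκ (κ : Fin k) := hGindep.precomp (Prod.mk_right_injective κ)
  simp_rw [hsq]
  rw [integral_finsetSum _ fun κ _ => (integrable_sq_ttInner (hGmeas κ) (hGdist κ) X).const_mul _]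
  simp_rw [integral_const_mul, integral_sq_ttInner hρlast (hGmeas _) (hGdist _) (hindκ _),
    card_ttBonds hρ0 hρlast hρmid]
  simp only [sum_const, card_univ, Fintype.card_fin, nsmul_eq_mul, Nat.cast_pow]
  field_simp

/-- Expected isometry of the tensorized Rademacher random projection `f^TT_R`:
`𝔼 ‖f^TT_R(𝒳)‖₂² = ‖𝒳‖_F²`. -/
theorem tt_rademacher_rp_expected_isometry
    {Ω : Type} [MeasurableSpace Ω] (μ : Measure Ω) [IsProbabilityMeasure μ]
    (N k : ℕ) (hN : 1 ≤ N) (hk : 1 ≤ k)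
    (d : Fin N → ℕ) (hd : ∀ n, 0 < d n) (R : ℕ) (hR : 0 < R)
    (ρ : Fin (N + 1) → ℕ) (hρ0 : ρ 0 = 1) (hρlast : ρ (Fin.last N) = 1)
    (hρmid : ∀ n : Fin (N + 1), n ≠ 0 → n ≠ Fin.last N → ρ n = R)
    (X : ((n : Fin N) → Fin (d n)) → ℝ)
    (G : Ω → Fin k → (n : Fin N) → Fin (ρ n.castSucc) → Fin (d n) → Fin (ρ n.succ) → ℝ)
    (hGmeas : ∀ κ n a i b, Measurable (fun ω => G ω κ n a i b))
    (hGdist : ∀ κ n a i b, Measure.map (fun ω => G ω κ n a i b) μ = radDist)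
    (hGindep : iIndepFun
      (fun p : Fin k × (Σ n : Fin N, Fin (ρ n.castSucc) × Fin (d n) × Fin (ρ n.succ)) =>
        fun ω => G ω p.1 p.2.1 p.2.2.1 p.2.2.2.1 p.2.2.2.2) μ)
    (f : Ω → Fin k → ℝ)
    (hf : ∀ ω κ, f ω κ = (1 / Real.sqrt ((k : ℝ) * (R : ℝ) ^ (N - 1))) *
      ∑ i, X i * ∑ a, ∑ b, ttPath d ρ (G ω κ) i a b) :
    ∫ ω, ∑ κ, (f ω κ) ^ 2 ∂μ = ∑ i, (X i) ^ 2 :=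
  tt_rademacher_rp_expected_isometry_general μ N k hk d R hR ρ hρ0 hρlast hρmid X G hGmeas hGdist
    hGindep f hf
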